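/- Let m ≥ 1 and let f₁, …, f_m : [−π, π] → ℝ be nonnegative measurable functions, p₁, …, p_m : [−π, π] → ℝ strictly positive measurable functions, and λ > 0. Define x*_i(ω) = max{0, f_i(ω)/√λ − 1/p_i(ω)}. Then for every choice of nonnegative measurable functions x₁, …, x_m : [−π, π] → ℝ satisfying the power constraint (1/2π) ∫_{−π}^{π} ∑_{i=1}^m x_i(ω) dω = (1/2π) ∫_{−π}^{π} ∑_{i=1}^m x*_i(ω) dω (all these integrals assumed finite, together with the objective integrals below), one has ∑_{i=1}^m (1/2π) ∫_{−π}^{π} f_i(ω)² / (1/p_i(ω) + x*_i(ω)) dω ≤ ∑_{i=1}^m (1/2π) ∫_{−π}^{π} f_i(ω)² / (1/p_i(ω) + x_i(ω)) dω. (Waterfilling optimality of the diagonal pre-filter for the LMS mechanism when the input spectrum is diagonal.) -/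
import Mathlib
open MeasureTheory Real

lemma key_pointwise (a f lam xx : ℝ) (ha : 0 < a) (hf : 0 ≤ f) (hlam : 0 < lam)
    (hxx : 0 ≤ xx) :
    f ^ 2 / (a + max 0 (f / Real.sqrt lam - a)) + lam * max 0 (f / Real.sqrt lam - a)
      ≤ f ^ 2 / (a + xx) + lam * xx := by
  set s := Real.sqrt lam with hs_def
  have hs : 0 < s := Real.sqrt_pos.2 hlam
  have hs2 : s ^ 2 = lam := Real.sq_sqrt hlam.le
  have ht : 0 < a + xx := by linarith
  rcases le_or_gt (f / s) a with h | h
  · rw [max_eq_left (by linarith)]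
    have hfa : f ≤ a * s := by
      have := (div_le_iff₀ hs).1 h
      linarith
    have hfa2 : f ^ 2 ≤ lam * a ^ 2 := by nlinarith
    rw [add_zero, mul_zero, add_zero]
    have e : f ^ 2 / a - f ^ 2 / (a + xx) = f ^ 2 * xx / (a * (a + xx)) := by
      field_simp; ring
    have e2 : f ^ 2 * xx / (a * (a + xx)) ≤ lam * xx := by
      rw [div_le_iff₀ (by positivity)]
      nlinarith [mul_nonneg hxx ha.le, mul_nonneg (mul_nonneg hlam.le hxx) hxx]
    linarith
  · rw [max_eq_right (by linarith)]
    have hfpos : 0 < f := by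
      have := (lt_div_iff₀ hs).1 h
      nlinarith
    have hfs : a + (f / s - a) = f / s := by ring
    rw [hfs]
    have h1 : f ^ 2 / (f / s) = f * s := by
      field_simp
    rw [h1]
    have amgm : 2 * (s * f) - lam * (a + xx) ≤ f ^ 2 / (a + xx) :=
      (le_div_iff₀ ht).2 (by rw [← hs2]; nlinarith [sq_nonneg (f - s * (a + xx))])
    have e3 : lam * (f / s) = s * f := by
      rw [← hs2]; field_simp
    have expand : lam * (f / s - a) = lam * (f / s) - lam * a := by ring
    linarith

theorem waterfilling_optimality (m : ℕ) (hm : 1 ≤ m)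
    (f : Fin m → ℝ → ℝ) (hf : ∀ i, Measurable (f i)) (hf0 : ∀ i ω, 0 ≤ f i ω)
    (p : Fin m → ℝ → ℝ) (hp : ∀ i, Measurable (p i)) (hp0 : ∀ i ω, 0 < p i ω)
    (lam : ℝ) (hlam : 0 < lam)
    (xstar : Fin m → ℝ → ℝ)
    (hxstar : ∀ i ω, xstar i ω = max 0 (f i ω / Real.sqrt lam - 1 / p i ω))
    (x : Fin m → ℝ → ℝ) (hx : ∀ i, Measurable (x i)) (hx0 : ∀ i ω, 0 ≤ x i ω)
    (hxint : IntegrableOn (fun ω => ∑ i, x i ω) (Set.Icc (-π) π))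
    (hxstarint : IntegrableOn (fun ω => ∑ i, xstar i ω) (Set.Icc (-π) π))
    (hobjint : ∀ i, IntegrableOn
      (fun ω => f i ω ^ 2 / (1 / p i ω + x i ω)) (Set.Icc (-π) π))
    (hobjstarint : ∀ i, IntegrableOn
      (fun ω => f i ω ^ 2 / (1 / p i ω + xstar i ω)) (Set.Icc (-π) π))
    (hconstraint : (1 / (2 * π)) * ∫ ω in Set.Icc (-π) π, ∑ i, x i ω =
      (1 / (2 * π)) * ∫ ω in Set.Icc (-π) π, ∑ i, xstar i ω) :
    (∑ i, (1 / (2 * π)) * ∫ ω in Set.Icc (-π) π, f i ω ^ 2 / (1 / p i ω + xstar i ω)) ≤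
      ∑ i, (1 / (2 * π)) * ∫ ω in Set.Icc (-π) π, f i ω ^ 2 / (1 / p i ω + x i ω) := by
  set S := Set.Icc (-π) π with hS
  have hc : (0:ℝ) < 1 / (2 * π) := by positivity
  -- pointwise inequality
  have hpt : ∀ ω, (∑ i, f i ω ^ 2 / (1 / p i ω + xstar i ω)) + lam * ∑ i, xstar i ω
      ≤ (∑ i, f i ω ^ 2 / (1 / p i ω + x i ω)) + lam * ∑ i, x i ω := by
    intro ω
    rw [Finset.mul_sum, Finset.mul_sum, ← Finset.sum_add_distrib, ← Finset.sum_add_distrib]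
    refine Finset.sum_le_sum fun i _ => ?_
    rw [hxstar i ω]
    exact key_pointwise (1 / p i ω) (f i ω) lam (x i ω)
      (by have := hp0 i ω; positivity) (hf0 i ω) hlam (hx0 i ω)
  have hLint : IntegrableOn
      (fun ω => (∑ i, f i ω ^ 2 / (1 / p i ω + xstar i ω)) + lam * ∑ i, xstar i ω) S :=
    (integrable_finset_sum _ fun i _ => hobjstarint i).add (hxstarint.const_mul lam)
  have hRint : IntegrableOn
      (fun ω => (∑ i, f i ω ^ 2 / (1 / p i ω + x i ω)) + lam * ∑ i, x i ω) S :=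
    (integrable_finset_sum _ fun i _ => hobjint i).add (hxint.const_mul lam)
  have hI := integral_mono hLint hRint (fun ω => hpt ω)
  rw [integral_add (integrable_finset_sum _ fun i _ => hobjstarint i) (hxstarint.const_mul lam),
      integral_add (integrable_finset_sum _ fun i _ => hobjint i) (hxint.const_mul lam),
      integral_const_mul, integral_const_mul] at hI
  have hxeq : ∫ ω in S, ∑ i, x i ω = ∫ ω in S, ∑ i, xstar i ω :=
    mul_left_cancel₀ hc.ne' hconstraint
  have hI2 : ∫ ω in S, ∑ i, f i ω ^ 2 / (1 / p i ω + xstar i ω)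
      ≤ ∫ ω in S, ∑ i, f i ω ^ 2 / (1 / p i ω + x i ω) := by
    rw [hxeq] at hI; linarith
  calc ∑ i, (1 / (2 * π)) * ∫ ω in S, f i ω ^ 2 / (1 / p i ω + xstar i ω)
      = (1 / (2 * π)) * ∫ ω in S, ∑ i, f i ω ^ 2 / (1 / p i ω + xstar i ω) := by
        rw [integral_finset_sum _ fun i _ => hobjstarint i, Finset.mul_sum]
    _ ≤ (1 / (2 * π)) * ∫ ω in S, ∑ i, f i ω ^ 2 / (1 / p i ω + x i ω) :=
        mul_le_mul_of_nonneg_left hI2 hc.le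
    _ = ∑ i, (1 / (2 * π)) * ∫ ω in S, f i ω ^ 2 / (1 / p i ω + x i ω) := by
        rw [integral_finset_sum _ fun i _ => hobjint i, Finset.mul_sum]
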